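/- There exists a computable functional unit for ℕ with exactly three method operations (i.e. consisting of exactly three named method operations) that is universal. -/

import Mathlib

/-- Primitive instructions: plain basic `f.m`, positive test `+f.m`, negative test `-f.m`
(method names are natural numbers, there is a single focus `f`), forward jump `#l`,
backward jump `\l`, and the positive/negative termination instructions `!t` / `!f`. -/
inductive Instr : Type where
  | basic (m : ℕ)
  | postest (m : ℕ)
  | negtest (m : ℕ)
  | fjump (l : ℕ)
  | bjump (l : ℕ)
  | haltT
  | haltF
deriving DecidableEq

/-- A functional unit for a state space `S`: a finite, functional set of
(method name, method operation) pairs, where a method operation is a total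
function `S → Bool × S`. -/
structure FU (S : Type*) where
  carrier : Set (ℕ × (S → Bool × S))
  finite : carrier.Finite
  functional : ∀ {m : ℕ} {M M' : S → Bool × S},
    (m, M) ∈ carrier → (m, M') ∈ carrier → M = M'

/-- The interface of a functional unit: the set of method names occurring in it. -/
def FU.iface {S : Type*} (H : FU S) : Set ℕ := {m | ∃ M, (m, M) ∈ H.carrier}

/-- The method operation named `m` in `H` (an arbitrary fixed value if `m ∉ I(H)`). -/
noncomputable def FU.op {S : Type*} (H : FU S) (m : ℕ) (s : S) : Bool × S :=
  letI := Classical.propDecidable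
  if h : ∃ M, (m, M) ∈ H.carrier then h.choose s else (true, s)

/-- The restriction `⟨I, H⟩` of a functional unit to a set `I` of method names. -/
def FU.restrict {S : Type*} (H : FU S) (I : Set ℕ) : FU S where
  carrier := {p ∈ H.carrier | p.1 ∈ I}
  finite := H.finite.subset (Set.sep_subset _ _)
  functional := fun hM hM' => H.functional hM.1 hM'.1

/-- The method names used by an instruction all belong to `I`. -/
def Instr.namesIn (I : Set ℕ) : Instr → Prop
  | .basic m => m ∈ I
  | .postest m => m ∈ I
  | .negtest m => m ∈ I
  | _ => True

/-- An instruction sequence over a set `I` of method names: a finite nonempty list of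
primitive instructions whose method names belong to `I`. -/
def InstrSeqOver (I : Set ℕ) (x : List Instr) : Prop :=
  x ≠ [] ∧ ∀ u ∈ x, u.namesIn I

/-- `Exec H x i s b s'` : execution of the instruction sequence `x` on the functional
unit `H`, from (0-based) position `i` in state `s`, terminates delivering the Boolean
value `b` with final state `s'`.  (Position `i` here corresponds to the 1-based
position `i+1`; positions outside the sequence, jumps `#0`/`\0`, and infinite
executions admit no derivation, i.e. execution does not terminate.) -/
inductive Exec {S : Type*} (H : FU S) (x : List Instr) : ℕ → S → Bool → S → Prop where
  | basic {i : ℕ} {s : S} {b : Bool} {s' : S} (m : ℕ)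
      (hu : x[i]? = some (Instr.basic m))
      (h : Exec H x (i + 1) (H.op m s).2 b s') : Exec H x i s b s'
  | posT {i : ℕ} {s : S} {b : Bool} {s' : S} (m : ℕ)
      (hu : x[i]? = some (Instr.postest m)) (hr : (H.op m s).1 = true)
      (h : Exec H x (i + 1) (H.op m s).2 b s') : Exec H x i s b s'
  | posF {i : ℕ} {s : S} {b : Bool} {s' : S} (m : ℕ)
      (hu : x[i]? = some (Instr.postest m)) (hr : (H.op m s).1 = false)
      (h : Exec H x (i + 2) (H.op m s).2 b s') : Exec H x i s b s'
  | negT {i : ℕ} {s : S} {b : Bool} {s' : S} (m : ℕ)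
      (hu : x[i]? = some (Instr.negtest m)) (hr : (H.op m s).1 = true)
      (h : Exec H x (i + 2) (H.op m s).2 b s') : Exec H x i s b s'
  | negF {i : ℕ} {s : S} {b : Bool} {s' : S} (m : ℕ)
      (hu : x[i]? = some (Instr.negtest m)) (hr : (H.op m s).1 = false)
      (h : Exec H x (i + 1) (H.op m s).2 b s') : Exec H x i s b s'
  | fjump {i : ℕ} {s : S} {b : Bool} {s' : S} (l : ℕ)
      (hu : x[i]? = some (Instr.fjump l))
      (h : Exec H x (i + l) s b s') : Exec H x i s b s'
  | bjump {i : ℕ} {s : S} {b : Bool} {s' : S} (l : ℕ)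
      (hu : x[i]? = some (Instr.bjump l)) (hl : l ≤ i)
      (h : Exec H x (i - l) s b s') : Exec H x i s b s'
  | haltT {i : ℕ} {s : S} (hu : x[i]? = some Instr.haltT) : Exec H x i s true s
  | haltF {i : ℕ} {s : S} (hu : x[i]? = some Instr.haltF) : Exec H x i s false s

/-- `M` is a derived method operation of `H`: there is an instruction sequence `x`
over `I(H)` whose produced partial method operation `⌈x⌉_H` is total and equals `M`. -/
def DerivedOp {S : Type*} (H : FU S) (M : S → Bool × S) : Prop :=
  ∃ x : List Instr, InstrSeqOver H.iface x ∧ ∀ s, Exec H x 0 s (M s).1 (M s).2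

/-- `H ≤ H'` : every method operation of `H` is a derived method operation of `H'`. -/
def FU.le {S : Type*} (H H' : FU S) : Prop :=
  ∀ m M, (m, M) ∈ H.carrier → DerivedOp H' M

/-- `H ≡ H'` : `H ≤ H'` and `H' ≤ H`. -/
def FU.equiv {S : Type*} (H H' : FU S) : Prop := FU.le H H' ∧ FU.le H' H

/-- A method operation on ℕ is computable if both its components are. -/
def ComputableMO (M : ℕ → Bool × ℕ) : Prop :=
  Computable (fun n => (M n).1) ∧ Computable (fun n => (M n).2)

/-- A functional unit for ℕ is computable if all its method operations are. -/
def ComputableFU (H : FU ℕ) : Prop :=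
  ∀ m M, (m, M) ∈ H.carrier → ComputableMO M

/-!
The unit has three methods on configurations encoded in ℕ: `pack` turns the input `s` into
the running configuration (code `0`, input `s`, fuel `0`), `incr` increments the code, and
`step` evaluates the code with the current fuel via `evaln`, replying `false` and adding fuel
while it has not halted; on a halted configuration it delivers the reply encoded in the
output. A computable `M` is computed, up to the encoding `(β (F n), G n) ↦ ⟨F n, G n⟩` of
replies, by some code `e`, so it is derived by `f.pack; (f.incr)^e; -f.step; \1; +f.step; !t; !f`.
-/

namespace FU

variable {S : Type*}

/-- The effect component `m_H^e` of the method named `m`. -/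
noncomputable abbrev eff (H : FU S) (m : ℕ) (s : S) : S := (H.op m s).2

theorem op_eq_of_mem (H : FU S) {m : ℕ} {M : S → Bool × S} (h : (m, M) ∈ H.carrier) :
    H.op m = M := by
  have hm : ∃ M, (m, M) ∈ H.carrier := ⟨M, h⟩
  funext s
  rw [FU.op, dif_pos hm, H.functional hm.choose_spec h]

def ofFin {n : ℕ} (ops : Fin n → S → Bool × S) : FU S where
  carrier := Set.range fun i : Fin n => (i.val, ops i)
  finite := Set.finite_range _
  functional := by
    rintro m M M' ⟨i, hi⟩ ⟨j, hj⟩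
    obtain rfl : i = j := Fin.ext ((congrArg Prod.fst hi).trans (congrArg Prod.fst hj).symm)
    exact (congrArg Prod.snd hi).symm.trans (congrArg Prod.snd hj)

variable {n : ℕ} (ops : Fin n → S → Bool × S)

theorem ncard_ofFin : (ofFin ops).carrier.ncard = n := by
  rw [ofFin, Set.ncard_range_of_injective, Nat.card_eq_fintype_card, Fintype.card_fin]
  exact fun i j h => Fin.ext (congrArg Prod.fst h)

theorem mem_iface_ofFin (i : Fin n) : i.val ∈ (ofFin ops).iface := ⟨ops i, i, rfl⟩

theorem op_ofFin (i : Fin n) : (ofFin ops).op i = ops i := op_eq_of_mem _ ⟨i, rfl⟩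

end FU

namespace Exec

variable {S : Type*} {H : FU S} {x : List Instr} {i m : ℕ} {s s' : S} {b : Bool}

theorem of_basic_run {n : ℕ} (hx : ∀ j < n, x[i + j]? = some (.basic m))
    (h : Exec H x (i + n) ((H.eff m)^[n] s) b s') : Exec H x i s b s' := by
  induction n generalizing i s with
  | zero => simpa using h
  | succ n ih =>
    refine .basic m (by simpa using hx 0 n.succ_pos) (ih (i := i + 1) (fun j hj => ?_) ?_)
    · rw [Nat.add_right_comm]; exact hx (j + 1) (by omega)
    · rw [Nat.add_right_comm, ← Function.iterate_succ_apply]; exact h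

theorem of_test_halt (hx : x[i]? = some (.postest m)) (hT : x[i + 1]? = some .haltT)
    (hF : x[i + 2]? = some .haltF) : Exec H x i s (H.op m s).1 (H.op m s).2 := by
  cases hr : (H.op m s).1
  · exact .posF m hx hr (.haltF hF)
  · exact .posT m hx hr (.haltT hT)

theorem of_test_loop {n : ℕ} (hx : x[i]? = some (.negtest m))
    (hback : x[i + 1]? = some (.bjump 1))
    (hfalse : ∀ j < n, (H.op m ((H.eff m)^[j] s)).1 = false)
    (htrue : (H.op m ((H.eff m)^[n] s)).1 = true)
    (h : Exec H x (i + 2) ((H.eff m)^[n + 1] s) b s') : Exec H x i s b s' := by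
  induction n generalizing s with
  | zero => exact .negT m hx htrue h
  | succ n ih =>
    refine .negF m hx (hfalse 0 n.succ_pos) (.bjump 1 hback (by omega) ?_)
    rw [Nat.add_sub_cancel]
    exact ih (fun j hj => hfalse (j + 1) (by omega)) htrue h

end Exec

namespace UniversalFU

open Nat.Partrec (Code)
open Nat.Partrec.Code Denumerable Encodable

/-- `inl (e, s, k)`: running the code `e` on input `s` with fuel `k`; `inr r`: halted with
output `r`. -/
abbrev Config : Type := (ℕ × ℕ × ℕ) ⊕ ℕ

def running (e s k : ℕ) : ℕ := encode (Sum.inl (e, s, k) : Config)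

def halted (r : ℕ) : ℕ := encode (Sum.inr r : Config)

def encodeReply (p : Bool × ℕ) : ℕ := Nat.pair (cond p.1 0 1) p.2

def decodeReply (r : ℕ) : Bool × ℕ := (r.unpair.1 == 0, r.unpair.2)

theorem decodeReply_encodeReply (p : Bool × ℕ) : decodeReply (encodeReply p) = p := by
  obtain ⟨_ | _, v⟩ := p <;> simp [decodeReply, encodeReply]

def pack (s : ℕ) : Bool × ℕ := (true, running 0 s 0)

def incr (c : ℕ) : Bool × ℕ :=
  (true, (ofNat Config c).elim (fun p => running (p.1 + 1) p.2.1 p.2.2) fun _ => c)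

def stepRunning (p : ℕ × ℕ × ℕ) : Bool × ℕ :=
  (evaln p.2.2 (ofNat Code p.1) p.2.1).elim (false, running p.1 p.2.1 (p.2.2 + 1))
    fun r => (true, halted r)

def step (c : ℕ) : Bool × ℕ := (ofNat Config c).elim stepRunning decodeReply

theorem primrec_running : Primrec fun p : ℕ × ℕ × ℕ => running p.1 p.2.1 p.2.2 :=
  Primrec.encode.comp Primrec.sumInl

theorem primrec_halted : Primrec halted :=
  Primrec.encode.comp Primrec.sumInr

theorem primrec_decodeReply : Primrec decodeReply :=
  (Primrec.beq.comp (Primrec.fst.comp Primrec.unpair) (Primrec.const 0)).pair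
    (Primrec.snd.comp Primrec.unpair)

theorem primrec_pack : Primrec pack :=
  (Primrec.const true).pair <| primrec_running.comp <|
    (Primrec.const 0).pair (Primrec.id.pair (Primrec.const 0))

theorem primrec_incr : Primrec incr :=
  (Primrec.const true).pair <| Primrec.sumCasesOn (Primrec.ofNat Config)
    (primrec_running.comp <| (Primrec.succ.comp (Primrec.fst.comp Primrec.snd)).pair
      (Primrec.snd.comp Primrec.snd)).to₂
    Primrec.fst.to₂

theorem primrec_stepRunning : Primrec stepRunning := by
  have hevaln : Primrec fun p : ℕ × ℕ × ℕ => evaln p.2.2 (ofNat Code p.1) p.2.1 :=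
    primrec_evaln.comp <| ((Primrec.snd.comp Primrec.snd).pair
      ((Primrec.ofNat Code).comp Primrec.fst)).pair (Primrec.fst.comp Primrec.snd)
  have hfuel : Primrec fun p : ℕ × ℕ × ℕ => running p.1 p.2.1 (p.2.2 + 1) :=
    primrec_running.comp <| Primrec.fst.pair <| (Primrec.fst.comp Primrec.snd).pair
      (Primrec.succ.comp (Primrec.snd.comp Primrec.snd))
  refine (Primrec.option_casesOn hevaln ((Primrec.const false).pair hfuel)
    ((Primrec.const true).pair (primrec_halted.comp Primrec.snd)).to₂).of_eq fun p => ?_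
  cases h : evaln p.2.2 (ofNat Code p.1) p.2.1 <;> simp [stepRunning, h]

theorem primrec_step : Primrec step :=
  Primrec.sumCasesOn (Primrec.ofNat Config) (primrec_stepRunning.comp Primrec.snd).to₂
    (primrec_decodeReply.comp Primrec.snd).to₂

theorem incr_running (e s k : ℕ) : incr (running e s k) = (true, running (e + 1) s k) := by
  simp only [incr, running, ofNat_encode, Sum.elim_inl]

theorem step_running_of_none {e s k : ℕ} (h : evaln k (ofNat Code e) s = none) :
    step (running e s k) = (false, running e s (k + 1)) := by
  simp only [step, running, ofNat_encode, Sum.elim_inl, stepRunning, h, Option.elim]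

theorem step_running_of_some {e s k r : ℕ} (h : evaln k (ofNat Code e) s = some r) :
    step (running e s k) = (true, halted r) := by
  simp only [step, running, ofNat_encode, Sum.elim_inl, stepRunning, h, Option.elim]

theorem step_halted (r : ℕ) : step (halted r) = decodeReply r := by
  simp only [step, halted, ofNat_encode, Sum.elim_inr]

noncomputable def fu : FU ℕ := FU.ofFin ![pack, incr, step]

theorem op_fu_zero : fu.op 0 = pack := FU.op_ofFin _ 0

theorem op_fu_one : fu.op 1 = incr := FU.op_ofFin _ 1

theorem op_fu_two : fu.op 2 = step := FU.op_ofFin _ 2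

theorem computableFU_fu : ComputableFU fu := by
  rintro _ _ ⟨i, ⟨⟩⟩
  have hops : Primrec (![pack, incr, step] i) := by
    fin_cases i
    exacts [primrec_pack, primrec_incr, primrec_step]
  exact ⟨(Primrec.fst.comp hops).to_comp, (Primrec.snd.comp hops).to_comp⟩

theorem iterate_incr_running (n e s k : ℕ) :
    (fu.eff 1)^[n] (running e s k) = running (e + n) s k := by
  induction n with
  | zero => rfl
  | succ n ih =>
    rw [Function.iterate_succ_apply', ih, FU.eff, op_fu_one, incr_running, Nat.add_assoc]

theorem iterate_step_running {n e s : ℕ} (h : ∀ j < n, evaln j (ofNat Code e) s = none) :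
    (fu.eff 2)^[n] (running e s 0) = running e s n := by
  induction n with
  | zero => rfl
  | succ n ih =>
    rw [Function.iterate_succ_apply', ih fun j hj => h j (by omega), FU.eff, op_fu_two,
      step_running_of_none (h n n.lt_succ_self)]

def prog (e : ℕ) : List Instr :=
  .basic 0 :: (List.replicate e (.basic 1) ++ [.negtest 2, .bjump 1, .postest 2, .haltT, .haltF])

theorem getElem?_prog_incr {e j : ℕ} (h : j < e) : (prog e)[1 + j]? = some (.basic 1) := by
  simp [prog, Nat.add_comm 1, List.getElem?_append, h]

theorem getElem?_prog_tail (e j : ℕ) :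
    (prog e)[1 + e + j]? = [Instr.negtest 2, .bjump 1, .postest 2, .haltT, .haltF][j]? := by
  rw [show 1 + e + j = e + j + 1 by omega]
  simp [prog, List.getElem?_append_right]

theorem instrSeqOver_prog (e : ℕ) : InstrSeqOver fu.iface (prog e) := by
  have hiface (i : Fin 3) : i.val ∈ fu.iface := FU.mem_iface_ofFin _ i
  refine ⟨List.cons_ne_nil _ _, fun u hu => ?_⟩
  simp only [prog, List.mem_cons, List.mem_append, List.mem_replicate, List.not_mem_nil,
    or_false] at hu
  rcases hu with rfl | ⟨-, rfl⟩ | rfl | rfl | rfl | rfl | rfl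
  exacts [hiface 0, hiface 1, hiface 2, trivial, hiface 2, trivial, trivial]

theorem exec_prog {c : Code} {s r : ℕ} (h : r ∈ c.eval s) :
    Exec fu (prog (encode c)) 0 s (decodeReply r).1 (decodeReply r).2 := by
  have hfuel : ∃ k, r ∈ evaln k c s := evaln_complete.1 h
  set k := Nat.find hfuel
  have hk : evaln k (ofNat Code (encode c)) s = some r := by
    rw [ofNat_encode]; exact Nat.find_spec hfuel
  have hbelow : ∀ j < k, evaln j (ofNat Code (encode c)) s = none := by
    intro j hj
    rw [ofNat_encode, Option.eq_none_iff_forall_ne_some]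
    intro r' hr'
    obtain rfl : r' = r := Part.mem_unique (evaln_sound hr') h
    exact Nat.find_min hfuel hj hr'
  have hhalt := Exec.of_test_halt (H := fu) (i := 1 + encode c + 2) (s := halted r)
    (getElem?_prog_tail _ 2) (getElem?_prog_tail _ 3) (getElem?_prog_tail _ 4)
  rw [op_fu_two, step_halted] at hhalt
  refine .basic 0 rfl <| Exec.of_basic_run (n := encode c) (fun j hj => getElem?_prog_incr hj) ?_
  rw [op_fu_zero, pack, iterate_incr_running, Nat.zero_add (encode c)]
  refine Exec.of_test_loop (n := k) (getElem?_prog_tail _ 0) (getElem?_prog_tail _ 1) ?_ ?_ ?_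
  · intro j hj
    rw [iterate_step_running fun i hi => hbelow i (by omega), op_fu_two,
      step_running_of_none (hbelow j hj)]
  · rw [iterate_step_running hbelow, op_fu_two, step_running_of_some hk]
  · rwa [Function.iterate_succ_apply', iterate_step_running hbelow, FU.eff, op_fu_two,
      step_running_of_some hk]

theorem derivedOp_fu {M : ℕ → Bool × ℕ} (hM : ComputableMO M) : DerivedOp fu M := by
  have henc : Computable fun n => encodeReply (M n) :=
    Primrec₂.natPair.to_comp.comp (Computable.cond hM.1 (Computable.const 0)
      (Computable.const 1)) hM.2
  obtain ⟨c, hc⟩ := exists_code.1 (Partrec.nat_iff.1 henc.partrec)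
  refine ⟨prog (encode c), instrSeqOver_prog _, fun s => ?_⟩
  have h : encodeReply (M s) ∈ c.eval s := by rw [hc]; exact Part.mem_some _
  simpa only [decodeReply_encodeReply] using exec_prog h

end UniversalFU

open UniversalFU in
/-- There exists a universal computable functional unit for ℕ with exactly three
named method operations. -/
theorem exists_universal_computable_fu_three :
    ∃ H : FU ℕ, ComputableFU H ∧ H.carrier.ncard = 3 ∧
      ∀ L : FU ℕ, ComputableFU L → FU.le L H :=
  ⟨fu, computableFU_fu, FU.ncard_ofFin _, fun _ hL m M hM => derivedOp_fu (hL m M hM)⟩
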